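/- arXiv:1310.6696 — 2 statements merged into one kernel-verified Lean document; each statement's English description precedes it below -/
import Mathlib

section
/- Let S = {v, w, x, y, z} and consider the type D datum over A⊗A⊗A (the three tensor factors labeled ρ, σ, τ) whose only nonzero coefficients are: a(v,y) = ρ₁⊗σ₃⊗τ₁₂₃ + ρ₁₂₃⊗σ₁₂₃⊗τ₁₂₃; a(v,x) = ρ₃⊗1⊗1; a(v,z) = 1⊗1⊗τ₃; a(w,y) = ρ₁⊗σ₃⊗τ₁ + ρ₁₂₃⊗σ₁₂₃⊗τ₁; a(w,x) = ρ₃⊗σ₁₂⊗1; a(x,v) = ρ₂⊗σ₁₂⊗1; a(x,w) = ρ₂⊗1⊗1; a(x,y) = 1⊗σ₁⊗τ₃; a(y,x) = 1⊗σ₂⊗τ₂; a(y,z) = ρ₂⊗σ₂⊗1; a(z,y) = ρ₃⊗σ₁⊗1; a(z,w) = 1⊗1⊗τ₂. Then this datum satisfies the type D structure relation: for all u, u' ∈ S, Σ_{v'∈S} a(u,v')·a(v',u') = 0 in A⊗A⊗A. (This is the differential of the type D trimodule CFD³ of the trivial S¹-bundle over the pair of pants in the middle spin^c structure, Theorem 1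 of the paper.) -/
/-!
The torus algebra `A` over `F₂ = ZMod 2` is the 8-dimensional algebra with basis
(indexed by `Fin 8`): `0 ↦ ι₀, 1 ↦ ι₁, 2 ↦ ρ₁, 3 ↦ ρ₂, 4 ↦ ρ₃, 5 ↦ ρ₁₂, 6 ↦ ρ₂₃, 7 ↦ ρ₁₂₃`.
We represent elements of `A` as coordinate vectors `Fin 8 → ZMod 2`, and elements of the
threefold tensor product `A ⊗ A ⊗ A` as `Fin 8 → Fin 8 → Fin 8 → ZMod 2` (coordinates in
the basis of pure tensors of basis elements), with the induced componentwise multiplication.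
-/

/-- Structure constants of the torus algebra: `torusC i j k` is the coefficient of the basis
element `k` in the product of the basis elements `i` and `j`.  The nonzero products are
`ι₀ι₀ = ι₀`, `ι₁ι₁ = ι₁`, `ι₀ρ₁ = ρ₁ι₁ = ρ₁`, `ι₁ρ₂ = ρ₂ι₀ = ρ₂`, `ι₀ρ₃ = ρ₃ι₁ = ρ₃`,
`ι₀ρ₁₂ = ρ₁₂ι₀ = ρ₁₂`, `ι₁ρ₂₃ = ρ₂₃ι₁ = ρ₂₃`, `ι₀ρ₁₂₃ = ρ₁₂₃ι₁ = ρ₁₂₃`,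
`ρ₁ρ₂ = ρ₁₂`, `ρ₂ρ₃ = ρ₂₃`, `ρ₁ρ₂₃ = ρ₁₂ρ₃ = ρ₁₂₃`. -/
def torusC (i j k : Fin 8) : ZMod 2 :=
  if (i.val, j.val, k.val) ∈
      ([(0,0,0), (1,1,1),
        (0,2,2), (2,1,2), (1,3,3), (3,0,3), (0,4,4), (4,1,4),
        (0,5,5), (5,0,5), (1,6,6), (6,1,6), (0,7,7), (7,1,7),
        (2,3,5), (3,4,6), (2,6,7), (5,4,7)] : List (ℕ × ℕ × ℕ))
  then 1 else 0

/-- Elements of the torus algebra `A`, as coordinate vectors in the basis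
`ι₀, ι₁, ρ₁, ρ₂, ρ₃, ρ₁₂, ρ₂₃, ρ₁₂₃`. -/
abbrev TorusAlg := Fin 8 → ZMod 2

/-- The `n`-th basis element of the torus algebra. -/
def bas (n : ℕ) : TorusAlg := fun j => if j.val = n then 1 else 0

/-- The unit `1 = ι₀ + ι₁` of the torus algebra. -/
def oneA : TorusAlg := bas 0 + bas 1
def r1 : TorusAlg := bas 2
def r2 : TorusAlg := bas 3
def r3 : TorusAlg := bas 4
def r12 : TorusAlg := bas 5
def r23 : TorusAlg := bas 6
def r123 : TorusAlg := bas 7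

/-- Elements of `A ⊗ A ⊗ A` (the three tensor factors labeled ρ, σ, τ). -/
abbrev T3 := Fin 8 → Fin 8 → Fin 8 → ZMod 2

/-- The pure tensor `x ⊗ y ⊗ z` in `A ⊗ A ⊗ A`. -/
def tp3 (x y z : TorusAlg) : T3 := fun i j k => x i * y j * z k

/-- Multiplication on `A ⊗ A ⊗ A`, componentwise in the three tensor factors. -/
def mul3 (x y : T3) : T3 := fun k₁ k₂ k₃ =>
  ∑ i₁ : Fin 8, ∑ i₂ : Fin 8, ∑ i₃ : Fin 8, ∑ j₁ : Fin 8, ∑ j₂ : Fin 8, ∑ j₃ : Fin 8,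
    x i₁ i₂ i₃ * y j₁ j₂ j₃ * (torusC i₁ j₁ k₁ * torusC i₂ j₂ k₂ * torusC i₃ j₃ k₃)

/-- The five generators of the type `D` trimodule `CFD³(𝒴_P)` of the trivial `S¹`-bundle over
the pair of pants in the middle spin^c structure. -/
inductive Gen | v | w | x | y | z
  deriving DecidableEq

instance : Fintype Gen :=
  ⟨{Gen.v, Gen.w, Gen.x, Gen.y, Gen.z}, fun a => by cases a <;> simp⟩

open Gen in
/-- The coefficients of the differential of the trimodule of Theorem 1: `coeff u u'` is the
coefficient in `A ⊗ A ⊗ A` of `u'` in `∂ u`. -/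
def coeff : Gen → Gen → T3
  | v, y => tp3 r1 r3 r123 + tp3 r123 r123 r123
  | v, x => tp3 r3 oneA oneA
  | v, z => tp3 oneA oneA r3
  | w, y => tp3 r1 r3 r1 + tp3 r123 r123 r1
  | w, x => tp3 r3 r12 oneA
  | x, v => tp3 r2 r12 oneA
  | x, w => tp3 r2 oneA oneA
  | x, y => tp3 oneA r1 r3
  | y, x => tp3 oneA r2 r2
  | y, z => tp3 r2 r2 oneA
  | z, y => tp3 r3 r1 oneA
  | z, w => tp3 oneA oneA r2
  | _, _ => 0

/-!
Pure tensors multiply factorwise, so every coefficient of `∂²` is a sum of pure tensors of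
products in `A`. Besides the unit laws, only the Reeb products `ρ₁ρ₂ = ρ₁₂`, `ρ₂ρ₃ = ρ₂₃`,
`ρ₁₂ρ₃ = ρ₁₂₃` and a handful of vanishing products occur; the surviving terms come in equal
pairs (for instance `ρ₃ ⊗ σ₁ ⊗ τ₃` along both `v → x → y` and `v → z → y`), which cancel over `F₂`.
-/

def mulA (a b : TorusAlg) : TorusAlg := fun k => ∑ i : Fin 8, ∑ j : Fin 8, a i * b j * torusC i j k

theorem sum_sum_mul_sum_sum_mul_sum_sum {ι R : Type*} [Fintype ι] [CommSemiring R]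
    (f g h : ι → ι → R) :
    (∑ i, ∑ j, f i j) * (∑ i, ∑ j, g i j) * (∑ i, ∑ j, h i j)
      = ∑ i₁, ∑ i₂, ∑ i₃, ∑ j₁, ∑ j₂, ∑ j₃, f i₁ j₁ * g i₂ j₂ * h i₃ j₃ := by
  simp only [Finset.sum_mul, Finset.mul_sum, ← Finset.sum_product', Finset.univ_product_univ]
  exact Fintype.sum_equiv
    ⟨fun y => (y.2.2.1, y.2.1.1, y.1.1, y.2.2.2, y.2.1.2, y.1.2),
     fun x => ((x.2.2.1, x.2.2.2.2.2), (x.2.1, x.2.2.2.2.1), (x.1, x.2.2.2.1)),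
     fun _ => rfl, fun _ => rfl⟩ _ _ fun _ => rfl

@[simp]
theorem mulA_oneA_left (a : TorusAlg) : mulA oneA a = a := by
  have hunit : ∀ j k : Fin 8, ∑ i, oneA i * torusC i j k = if j = k then 1 else 0 := by decide
  funext k
  unfold mulA
  calc ∑ i, ∑ j, oneA i * a j * torusC i j k
      = ∑ j, a j * ∑ i, oneA i * torusC i j k := by
        rw [Finset.sum_comm]; simp only [Finset.mul_sum]; congr! 2 with j _ i; ring
    _ = a k := by simp [hunit]

@[simp]
theorem mulA_oneA_right (a : TorusAlg) : mulA a oneA = a := by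
  have hunit : ∀ i k : Fin 8, ∑ j, oneA j * torusC i j k = if i = k then 1 else 0 := by decide
  funext k
  unfold mulA
  calc ∑ i, ∑ j, a i * oneA j * torusC i j k
      = ∑ i, a i * ∑ j, oneA j * torusC i j k := by
        simp only [Finset.mul_sum]; congr! 2 with i _ j; ring
    _ = a k := by simp [hunit]

@[simp]
theorem mul3_tp3 (a b c a' b' c' : TorusAlg) :
    mul3 (tp3 a b c) (tp3 a' b' c') = tp3 (mulA a a') (mulA b b') (mulA c c') := by
  funext k₁ k₂ k₃
  simp only [mul3, tp3, mulA]
  rw [sum_sum_mul_sum_sum_mul_sum_sum]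
  congr! 6
  ring

@[simp]
theorem mul3_zero_left (t : T3) : mul3 0 t = 0 := by
  funext k₁ k₂ k₃; simp [mul3]

@[simp]
theorem mul3_zero_right (t : T3) : mul3 t 0 = 0 := by
  funext k₁ k₂ k₃; simp [mul3]

@[simp]
theorem mul3_add_left (s t u : T3) : mul3 (s + t) u = mul3 s u + mul3 t u := by
  funext k₁ k₂ k₃; simp [mul3, add_mul, Finset.sum_add_distrib]

@[simp]
theorem mul3_add_right (s t u : T3) : mul3 u (s + t) = mul3 u s + mul3 u t := by
  funext k₁ k₂ k₃; simp [mul3, mul_add, add_mul, Finset.sum_add_distrib]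

@[simp]
theorem tp3_zero_left (b c : TorusAlg) : tp3 0 b c = 0 := by
  funext; simp [tp3]

@[simp]
theorem tp3_zero_mid (a c : TorusAlg) : tp3 a 0 c = 0 := by
  funext; simp [tp3]

@[simp]
theorem tp3_zero_right (a b : TorusAlg) : tp3 a b 0 = 0 := by
  funext; simp [tp3]

@[simp]
theorem T3.add_self (t : T3) : t + t = 0 := by
  funext; exact CharTwo.add_self_eq_zero _

@[simp] theorem mulA_r1_r2 : mulA r1 r2 = r12 := by decide
@[simp] theorem mulA_r2_r3 : mulA r2 r3 = r23 := by decide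
@[simp] theorem mulA_r12_r3 : mulA r12 r3 = r123 := by decide
@[simp] theorem mulA_r2_r1 : mulA r2 r1 = 0 := by decide
@[simp] theorem mulA_r3_r2 : mulA r3 r2 = 0 := by decide
@[simp] theorem mulA_r2_r12 : mulA r2 r12 = 0 := by decide
@[simp] theorem mulA_r2_r123 : mulA r2 r123 = 0 := by decide
@[simp] theorem mulA_r12_r1 : mulA r12 r1 = 0 := by decide
@[simp] theorem mulA_r12_r12 : mulA r12 r12 = 0 := by decide
@[simp] theorem mulA_r12_r123 : mulA r12 r123 = 0 := by decide
@[simp] theorem mulA_r123_r2 : mulA r123 r2 = 0 := by decide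

theorem Gen.sum_univ {M : Type*} [AddCommMonoid M] (f : Gen → M) :
    ∑ g, f g = f .v + f .w + f .x + f .y + f .z := by
  rw [show (Finset.univ : Finset Gen) = {.v, .w, .x, .y, .z} from rfl,
    Finset.sum_insert (by decide), Finset.sum_insert (by decide),
    Finset.sum_insert (by decide), Finset.sum_insert (by decide), Finset.sum_singleton]
  abel

/-- The trimodule `CFD³(𝒴_P)` of Theorem 1 satisfies the type `D` structure relation:
the differential squares to zero, i.e. for all generators `u, u'`, the sum over intermediate
generators of the products of coefficients vanishes in `A ⊗ A ⊗ A`. -/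
theorem pairOfPants_trimodule_typeD_relation :
    ∀ u u' : Gen, (∑ v' : Gen, mul3 (coeff u v') (coeff v' u')) = 0 := by
  intro u u'
  cases u <;> cases u' <;> simp [Gen.sum_univ, coeff]
end

section
/- Let n ≥ 1, let x₁ < x₂ < ⋯ < x_{2n−1} be real numbers, and let f(z) = ((z−x₁)(z−x₃)⋯(z−x_{2n−1})) / ((z−x₂)(z−x₄)⋯(z−x_{2n−2})). Suppose c ∈ ℂ, c ≠ 0, is such that Im(c·f(z)) > 0 for every z ∈ ℂ with Im z > 0. Then c is a positive real number. Consequently, the map f is, up to multiplication by a positive real scalar, the unique scalar multiple of itself carrying the upper half-plane into the upper half-plane. -/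
open Complex Filter Finset Topology

private lemma interlacing_aux_factor_tendsto (w a : ℂ) :
    Tendsto (fun t : ℝ => 1 - a / ((t : ℂ) * w)) atTop (nhds 1) := by
  have h0 : Tendsto (fun t : ℝ => a / ((t : ℂ) * w)) atTop (nhds 0) := by
    have h1 : Tendsto (fun t : ℝ => ((t⁻¹ : ℝ) : ℂ) * (a / w)) atTop (nhds 0) := by
      have h2 : Tendsto (fun t : ℝ => ((t⁻¹ : ℝ) : ℂ)) atTop (nhds 0) := by
        have := (Complex.continuous_ofReal.tendsto (0 : ℝ)).comp tendsto_inv_atTop_zero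
        simpa [Function.comp_def] using this
      simpa using h2.mul_const (a / w)
    refine h1.congr' ?_
    filter_upwards [eventually_gt_atTop (0 : ℝ)] with t ht
    have ht' : (t : ℂ) ≠ 0 := by exact_mod_cast ht.ne'
    by_cases hw : w = 0
    · simp [hw]
    · rw [ofReal_inv]
      field_simp
  simpa using tendsto_const_nhds.sub h0

private lemma interlacing_aux_key_eq (m : ℕ) (hm : 1 ≤ m) (a b : ℕ → ℂ) (z : ℂ) (hz : z ≠ 0) :
    (∏ i ∈ range m, (z - a i)) / (∏ i ∈ range (m - 1), (z - b i)) =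
      z * ((∏ i ∈ range m, (1 - a i / z)) / (∏ i ∈ range (m - 1), (1 - b i / z))) := by
  have hfac : ∀ u : ℂ, z - u = z * (1 - u / z) := by
    intro u; field_simp
  have hnum : ∏ i ∈ range m, (z - a i) = z ^ m * ∏ i ∈ range m, (1 - a i / z) := by
    calc ∏ i ∈ range m, (z - a i) = ∏ i ∈ range m, (z * (1 - a i / z)) :=
          Finset.prod_congr rfl fun i _ => hfac (a i)
      _ = z ^ m * ∏ i ∈ range m, (1 - a i / z) := by
          rw [Finset.prod_mul_distrib, Finset.prod_const, Finset.card_range]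
  have hden : ∏ i ∈ range (m - 1), (z - b i)
      = z ^ (m - 1) * ∏ i ∈ range (m - 1), (1 - b i / z) := by
    calc ∏ i ∈ range (m - 1), (z - b i) = ∏ i ∈ range (m - 1), (z * (1 - b i / z)) :=
          Finset.prod_congr rfl fun i _ => hfac (b i)
      _ = z ^ (m - 1) * ∏ i ∈ range (m - 1), (1 - b i / z) := by
          rw [Finset.prod_mul_distrib, Finset.prod_const, Finset.card_range]
  have hpow : z ^ m = z ^ (m - 1) * z := by
    rw [← pow_succ]; congr 1; omega
  rw [hnum, hden, hpow]
  rw [show z ^ (m - 1) * z * ∏ i ∈ range m, (1 - a i / z)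
      = z ^ (m - 1) * (z * ∏ i ∈ range m, (1 - a i / z)) by ring]
  rw [mul_div_mul_left _ _ (pow_ne_zero _ hz), mul_div_assoc]

/-- Let `x₁ < x₂ < ⋯ < x_{2n−1}` be real numbers (here indexed from zero, so the numerator
roots are `x 0, x 2, …, x (2n−2)` and the denominator roots are `x 1, x 3, …, x (2n−3)`), and
let `f(z) = ((z−x₁)(z−x₃)⋯(z−x_{2n−1})) / ((z−x₂)(z−x₄)⋯(z−x_{2n−2}))`.  If `c ≠ 0` is a
complex number such that `c·f` carries the open upper half-plane into itself, then `c` is a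
positive real number; consequently `f` is, up to multiplication by a positive real scalar, the
unique scalar multiple of itself carrying the upper half-plane into the upper half-plane. -/
theorem interlacing_rational_map_scalar_rigidity
    (n : ℕ) (hn : 1 ≤ n) (x : ℕ → ℝ)
    (hx : ∀ i j : ℕ, i < j → j < 2 * n - 1 → x i < x j)
    (c : ℂ) (hc : c ≠ 0)
    (hmap : ∀ z : ℂ, 0 < z.im →
      0 < (c * ((∏ i ∈ Finset.range n, (z - (x (2 * i) : ℂ))) /
                (∏ i ∈ Finset.range (n - 1), (z - (x (2 * i + 1) : ℂ))))).im) :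
    ∃ r : ℝ, 0 < r ∧ c = (r : ℂ) := by
  -- Step 1: for every w in the open upper half-plane, Im (c * w) ≥ 0.
  have H : ∀ w : ℂ, 0 < w.im → 0 ≤ (c * w).im := by
    intro w hw
    have hw0 : w ≠ 0 := fun h => by simp [h] at hw
    set P : ℝ → ℂ := fun t => ∏ i ∈ range n, (1 - (x (2 * i) : ℂ) / ((t : ℂ) * w)) with hPdef
    set Q : ℝ → ℂ := fun t => ∏ i ∈ range (n - 1), (1 - (x (2 * i + 1) : ℂ) / ((t : ℂ) * w))
      with hQdef
    have hP : Tendsto P atTop (nhds 1) := by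
      have := tendsto_finset_prod (range n)
        (fun i (_ : i ∈ range n) => interlacing_aux_factor_tendsto w (x (2 * i)))
      simpa using this
    have hQ : Tendsto Q atTop (nhds 1) := by
      have := tendsto_finset_prod (range (n - 1))
        (fun i (_ : i ∈ range (n - 1)) => interlacing_aux_factor_tendsto w (x (2 * i + 1)))
      simpa using this
    have hg : Tendsto (fun t : ℝ => c * w * (P t / Q t)) atTop (nhds (c * w)) := by
      have hdiv := hP.div hQ one_ne_zero
      simpa using tendsto_const_nhds.mul hdiv
    have hev : ∀ᶠ t : ℝ in atTop, 0 ≤ (c * w * (P t / Q t)).im := by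
      filter_upwards [eventually_gt_atTop (0 : ℝ)] with t ht
      have ht' : (t : ℂ) ≠ 0 := by exact_mod_cast ht.ne'
      have hzim : 0 < ((t : ℂ) * w).im := by
        simp only [Complex.mul_im, Complex.ofReal_re, Complex.ofReal_im, zero_mul, add_zero]
        positivity
      have hz0 : (t : ℂ) * w ≠ 0 := mul_ne_zero ht' hw0
      have hmap' := hmap ((t : ℂ) * w) hzim
      have heq : c * w * (P t / Q t)
          = c * ((∏ i ∈ range n, ((t : ℂ) * w - (x (2 * i) : ℂ))) /
              (∏ i ∈ range (n - 1), ((t : ℂ) * w - (x (2 * i + 1) : ℂ)))) / (t : ℂ) := by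
        simp only [hPdef, hQdef]
        rw [interlacing_aux_key_eq n hn (fun i => (x (2 * i) : ℂ))
          (fun i => (x (2 * i + 1) : ℂ)) _ hz0]
        rw [eq_div_iff ht']
        ring
      rw [heq, Complex.div_ofReal_im]
      positivity
    have him : Tendsto (fun t : ℝ => (c * w * (P t / Q t)).im) atTop (nhds ((c * w).im)) :=
      (Complex.continuous_im.tendsto _).comp hg
    exact ge_of_tendsto him hev
  -- Step 2: deduce that c is a positive real.
  have h1 : ∀ s : ℝ, 0 ≤ c.re + c.im * s := by
    intro s
    have hs : (0 : ℝ) < ((s : ℂ) + I).im := by simp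
    have := H ((s : ℂ) + I) hs
    simpa [Complex.mul_im, Complex.add_im, Complex.add_re] using this
  have him0 : c.im = 0 := by
    by_contra h
    have h2 := h1 ((-c.re - 1) / c.im)
    rw [mul_div_cancel₀ _ h] at h2
    linarith
  have hre0 : 0 ≤ c.re := by simpa using h1 0
  have hre : 0 < c.re := by
    rcases hre0.lt_or_eq with h | h
    · exact h
    · exact absurd (by apply Complex.ext <;> simp [← h, him0]) hc
  exact ⟨c.re, hre, by apply Complex.ext <;> simp [him0]⟩
end
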